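/- arXiv:1502.07336 — 6 statements merged into one kernel-verified Lean document; each statement's English description precedes it below -/
import Mathlib

section
/- Let G be a transitive group of permutations of a finite set Ω. Let σ be a permutation of Ω of order 2 which fixes exactly one element ω of Ω and which normalizes G, that is G^σ = G. Let G_ω be the stabilizer of ω in G. Then M^σ = M for every group M with G_ω ≤ M ≤ G. -/
/-!
For `m ∈ M` put `x = m ω` and `s = m σ m⁻¹`, an involution whose only fixed point is `x`.
Then `c = σ s = σ m σ m⁻¹` lies in `G` and is inverted by both `σ` and `s`, so the
`⟨c⟩`-orbit of `x` is stable under both involutions. Counting fixed points modulo 2, the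
orbit has odd size (`s` fixes only `x` in it), hence `σ` fixes a point of it, which must be
`ω`. So `c ^ j x = ω`, and applying `σ` also `c ^ (1 - j) x = ω`; both powers therefore lie
in `G_ω m⁻¹ ⊆ M`, whence `c ∈ M` and `σ m σ = c m ∈ M`. As `M` is finite, `M^σ ⊆ M`
already gives equality.
-/

open Equiv Function

section Dihedral

variable {G : Type*} [Group G] {a b : G}

theorem semiconjBy_mul_inv_left_of_sq_eq_one (ha : a ^ 2 = 1) (hb : b ^ 2 = 1) :
    SemiconjBy a (a * b) (a * b)⁻¹ := by
  have hb' : b⁻¹ = b := inv_eq_of_mul_eq_one_right (by rw [← sq, hb])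
  rw [SemiconjBy, mul_inv_rev, inv_mul_cancel_right, ← mul_assoc, ← sq, ha, one_mul, hb']

theorem semiconjBy_mul_inv_right_of_sq_eq_one (ha : a ^ 2 = 1) (hb : b ^ 2 = 1) :
    SemiconjBy b (a * b) (a * b)⁻¹ := by
  have ha' : a⁻¹ = a := inv_eq_of_mul_eq_one_right (by rw [← sq, ha])
  have hb' : b⁻¹ = b := inv_eq_of_mul_eq_one_right (by rw [← sq, hb])
  rw [SemiconjBy, mul_inv_rev, ha', hb', mul_assoc]

end Dihedral

namespace Equiv.Perm

variable {α : Type*}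

theorem ncard_modEq_ncard_inter_fixedPoints [Finite α] {τ : Perm α} (hτ : τ ^ 2 = 1)
    {S : Set α} (hS : Set.MapsTo τ S S) :
    S.ncard ≡ (S ∩ fixedPoints τ).ncard [MOD 2] := by
  classical
  have := Fintype.ofFinite α
  have hττ : ∀ y, τ (τ y) = y := fun y => by rw [← mul_apply, ← sq, hτ, one_apply]
  set τ' := τ.subtypePerm (p := (· ∈ S)) fun y => ⟨fun h => hττ y ▸ hS h, fun h => hS h⟩
  have hτ' : τ' ^ 2 ^ 1 = 1 := by
    simp only [τ', pow_one, subtypePerm_pow, hτ]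
    rfl
  have hfix : S ∩ fixedPoints τ = Subtype.val '' ((τ'.supportᶜ : Finset S) : Set S) := by
    ext y
    simp only [Finset.coe_compl, Set.mem_image, Set.mem_compl_iff, Finset.mem_coe, mem_support,
      not_not, Subtype.exists, Subtype.ext_iff, subtypePerm_apply, τ']
    exact ⟨fun ⟨hy, hτy⟩ => ⟨y, hy, hτy, rfl⟩, fun ⟨_, hy, hτy, h⟩ => h ▸ ⟨hy, hτy⟩⟩
  have := (card_compl_support_modEq (p := 2) hτ').symm
  rwa [← Nat.card_eq_fintype_card, Nat.card_coe_set_eq, ← Set.ncard_coe_finset,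
    ← Set.ncard_image_of_injective _ Subtype.val_injective, ← hfix] at this

theorem apply_zpow_apply_of_semiconjBy {a c : Perm α} (h : SemiconjBy a c c⁻¹) (j : ℤ) (y : α) :
    a ((c ^ j) y) = (c ^ (-j)) (a y) := by
  rw [← mul_apply, (h.zpow_right j).eq, inv_zpow', mul_apply]

theorem SameCycle.apply_of_semiconjBy {a c : Perm α} (h : SemiconjBy a c c⁻¹) {x y : α}
    (hx : c.SameCycle x (a x)) (hy : c.SameCycle x y) : c.SameCycle x (a y) := by
  obtain ⟨j, rfl⟩ := hy
  rw [apply_zpow_apply_of_semiconjBy h]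
  exact sameCycle_zpow_right.mpr hx

theorem sameCycle_mul_of_unique_fixedPoint [Finite α] {σ s : Perm α} (hσ : σ ^ 2 = 1)
    (hs : s ^ 2 = 1) {ω x : α} (hσω : ∀ y, σ y = y ↔ y = ω) (hsx : ∀ y, s y = y ↔ y = x) :
    (σ * s).SameCycle x ω := by
  have hsx' : s x = x := (hsx x).mpr rfl
  set O := {y | (σ * s).SameCycle x y}
  have hsO : Set.MapsTo s O O := fun y =>
    SameCycle.apply_of_semiconjBy (semiconjBy_mul_inv_right_of_sq_eq_one hσ hs)
      (by rw [hsx'])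
  have hσO : Set.MapsTo σ O O := fun y =>
    SameCycle.apply_of_semiconjBy (semiconjBy_mul_inv_left_of_sq_eq_one hσ hs)
      (by rw [show σ x = (σ * s) x by rw [mul_apply, hsx']]
          exact sameCycle_apply_right.mpr (SameCycle.refl _ _))
  have hOs : O ∩ fixedPoints s = {x} := by
    ext y
    simp only [Set.mem_inter_iff, mem_fixedPoints, IsFixedPt, hsx, Set.mem_singleton_iff]
    exact ⟨And.right, by rintro rfl; exact ⟨SameCycle.refl _ _, rfl⟩⟩
  have hOodd := ncard_modEq_ncard_inter_fixedPoints hs hsO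
  rw [hOs, Set.ncard_singleton] at hOodd
  have hOσ := ncard_modEq_ncard_inter_fixedPoints hσ hσO
  obtain ⟨y, hyO, hy⟩ := Set.nonempty_of_ncard_ne_zero (s := O ∩ fixedPoints σ) fun h =>
    absurd (hOodd.symm.trans (h ▸ hOσ)) (by decide)
  rwa [(hσω y).mp hy] at hyO

end Equiv.Perm

theorem Subgroup.mem_of_mul_smul_eq_self {H α : Type*} [Group H] [MulAction H α]
    {G M : Subgroup H} {ω : α} (hGω : G ⊓ MulAction.stabilizer H ω ≤ M) (hMG : M ≤ G)
    {g m : H} (hg : g ∈ G) (hm : m ∈ M) (h : (g * m) • ω = ω) : g ∈ M := by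
  simpa using mul_mem (hGω ⟨mul_mem hg (hMG hm), h⟩) (inv_mem hm)

theorem conj_mem_of_stabilizer_le {Ω : Type*} [Finite Ω] {G M : Subgroup (Perm Ω)}
    {σ : Perm Ω} (hσ : σ ^ 2 = 1) {ω : Ω} (hfix : ∀ x, σ x = x ↔ x = ω)
    (hσG : σ ∈ Subgroup.normalizer (G : Set (Perm Ω)))
    (hGω : G ⊓ MulAction.stabilizer (Perm Ω) ω ≤ M) (hMG : M ≤ G)
    {m : Perm Ω} (hm : m ∈ M) : σ * m * σ⁻¹ ∈ M := by
  set s := MulAut.conj m σ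
  have hs : s ^ 2 = 1 := by rw [← map_pow, hσ, map_one]
  have hsx : ∀ y, s y = y ↔ y = m ω := fun y => by
    rw [show s y = m (σ (m⁻¹ y)) from rfl, ← Perm.eq_inv_iff_eq, hfix, Perm.inv_eq_iff_eq]
  set c := σ * s
  have hcm : σ * m * σ⁻¹ = c * m := by
    have hσ' : σ⁻¹ = σ := inv_eq_of_mul_eq_one_right (by rw [← sq, hσ])
    simp only [c, s, MulAut.conj_apply, hσ', mul_assoc, inv_mul_cancel, mul_one]
  have hcG : c ∈ G := by
    have := mul_mem ((Subgroup.mem_normalizer_iff.mp hσG m).mp (hMG hm)) (inv_mem (hMG hm))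
    rwa [hcm, mul_inv_cancel_right] at this
  obtain ⟨j, hj⟩ := Perm.sameCycle_mul_of_unique_fixedPoint hσ hs hfix hsx
  have hj' : (c ^ (-j + 1)) (m ω) = ω := calc
    (c ^ (-j + 1)) (m ω) = (c ^ (-j)) (σ (m ω)) := by
      rw [zpow_add_one, Perm.mul_apply, Perm.mul_apply, (hsx _).mpr rfl]
    _ = σ ((c ^ j) (m ω)) :=
      (Perm.apply_zpow_apply_of_semiconjBy (semiconjBy_mul_inv_left_of_sq_eq_one hσ hs) j _).symm
    _ = ω := by rw [hj, (hfix ω).mpr rfl]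
  have hcM : c ∈ M := by
    have := mul_mem (Subgroup.mem_of_mul_smul_eq_self hGω hMG (zpow_mem hcG _) hm hj')
      (Subgroup.mem_of_mul_smul_eq_self hGω hMG (zpow_mem hcG _) hm hj)
    rwa [← zpow_add, neg_add_cancel_comm, zpow_one] at this
  rw [hcm]
  exact mul_mem hcM hm

theorem conj_stable_of_between_stabilizer_general {Ω : Type*} [Finite Ω]
    (G : Subgroup (Equiv.Perm Ω))
    (σ : Equiv.Perm Ω) (hσ : orderOf σ = 2) (ω : Ω)
    (hfix : ∀ x : Ω, σ x = x ↔ x = ω)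
    (hnorm : G.map (MulAut.conj σ⁻¹).toMonoidHom = G)
    (M : Subgroup (Equiv.Perm Ω))
    (hGω : G ⊓ MulAction.stabilizer (Equiv.Perm Ω) ω ≤ M) (hMG : M ≤ G) :
    M.map (MulAut.conj σ⁻¹).toMonoidHom = M := by
  have hσ2 : σ ^ 2 = 1 := hσ ▸ pow_orderOf_eq_one σ
  have hσG : σ ∈ Subgroup.normalizer (G : Set (Perm Ω)) :=
    inv_mem_iff.mp (Subgroup.mem_normalizer_iff_map_conj_eq.mpr hnorm)
  have hσM : σ ∈ Subgroup.normalizer (M : Set (Perm Ω)) :=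
    Subgroup.mem_normalizer_fintype fun _ hm => conj_mem_of_stabilizer_le hσ2 hfix hσG hGω hMG hm
  exact Subgroup.mem_normalizer_iff_map_conj_eq.mp (inv_mem hσM)

/-- **Proposition (P:Gs).** Let `G` be a transitive group of permutations of the finite set
`Ω`. Let `σ` be a permutation of `Ω` of order 2 which fixes exactly one element `ω`, and
which normalizes `G`, that is `G^σ = G`. Then `M^σ = M` for each group `M` with
`G_ω ≤ M ≤ G`, where `G_ω` is the stabilizer of `ω` in `G` and `M^σ = σ⁻¹ M σ`. -/
theorem conj_stable_of_between_stabilizer {Ω : Type*} [Finite Ω]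
    (G : Subgroup (Equiv.Perm Ω))
    (htrans : ∀ x y : Ω, ∃ g ∈ G, g x = y)
    (σ : Equiv.Perm Ω) (hσ : orderOf σ = 2) (ω : Ω)
    (hfix : ∀ x : Ω, σ x = x ↔ x = ω)
    (hnorm : G.map (MulAut.conj σ⁻¹).toMonoidHom = G)
    (M : Subgroup (Equiv.Perm Ω))
    (hGω : G ⊓ MulAction.stabilizer (Equiv.Perm Ω) ω ≤ M) (hMG : M ≤ G) :
    M.map (MulAut.conj σ⁻¹).toMonoidHom = M :=
  conj_stable_of_between_stabilizer_general G σ hσ ω hfix hnorm M hGω hMG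
end

section
/- Let E be the elliptic curve Y² = X³ + aX + b with a, b ∈ ℝ, and suppose that the polynomial X³ + aX + b has three distinct real roots. Then there exists an element w ∈ E(ℝ) such that there is no ŵ ∈ E(ℝ) with w = 2ŵ, i.e. w is not twice a real point of E. -/
/-!
If `(x, y) = 2P` with `P = (x₀, y₀)` on `Y² = X³ + aX + b` and `e` is a root of the cubic, then
`x - e = ((x₀² - 2ex₀ - a - 2e²) / (2y₀))²`. Over `ℝ` the `x`-coordinate of a double is therefore
at least every root, so of two distinct roots `r₁ ≠ r₂` the 2-torsion points `(r₁, 0)` and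
`(r₂, 0)` cannot both be doubles.
-/

noncomputable section

/-- The elliptic curve `Y² = X³ + aX + b` over `ℝ`. -/
def Wℝ (a b : ℝ) : WeierstrassCurve.Affine ℝ :=
  { a₁ := 0, a₂ := 0, a₃ := 0, a₄ := a, a₆ := b }

end

open WeierstrassCurve WeierstrassCurve.Affine

section ShortNF

variable {F : Type*} [Field F] [DecidableEq F] {W : WeierstrassCurve.Affine F}

theorem isSquare_sub_root_of_some_eq_two_smul [W.IsShortNF] {x y e : F}
    {h : W.Nonsingular x y} {P : W.Point} (he : e ^ 3 + W.a₄ * e + W.a₆ = 0)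
    (hP : Point.some _ _ h = 2 • P) : IsSquare (x - e) := by
  rw [two_smul] at hP
  rcases P with _ | @⟨x₀, y₀, h₀⟩
  · exact absurd (hP.trans (add_zero 0)) (Point.some_ne_zero h)
  by_cases hy : y₀ = W.negY x₀ y₀
  · rw [Point.add_self_of_Y_eq hy] at hP
    exact absurd hP (Point.some_ne_zero h)
  rw [Point.add_self_of_Y_ne hy] at hP
  obtain ⟨hx, -⟩ := Point.some.inj hP
  have hy₀ : 2 * y₀ ≠ 0 := by
    simpa [negY, a₁_of_isShortNF, a₃_of_isShortNF, two_mul, eq_neg_iff_add_eq_zero] using hy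
  have hcurve : y₀ ^ 2 = x₀ ^ 3 + W.a₄ * x₀ + W.a₆ := by
    simpa [equation_iff, a₁_of_isShortNF, a₃_of_isShortNF] using h₀.1
  refine ⟨(x₀ ^ 2 - 2 * e * x₀ - W.a₄ - 2 * e ^ 2) / (2 * y₀), ?_⟩
  rw [hx, slope_of_Y_ne rfl hy]
  have h2 : (2 : F) ≠ 0 := left_ne_zero_of_mul hy₀
  have hy₀' : y₀ ≠ 0 := right_ne_zero_of_mul hy₀
  simp only [addX, negY, a₁_of_isShortNF, a₂_of_isShortNF, a₃_of_isShortNF, mul_zero, zero_mul,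
    add_zero, sub_zero, sub_neg_eq_add, ← two_mul]
  field_simp
  linear_combination (-4 * (2 * x₀ + e)) * hcurve + (-4 * (2 * x₀ + e)) * he

theorem root_le_of_some_eq_two_smul [W.IsShortNF] [LinearOrder F] [IsStrictOrderedRing F]
    {x y e : F} {h : W.Nonsingular x y} {P : W.Point} (he : e ^ 3 + W.a₄ * e + W.a₆ = 0)
    (hP : Point.some _ _ h = 2 • P) : e ≤ x :=
  sub_nonneg.mp (isSquare_sub_root_of_some_eq_two_smul he hP).nonneg

end ShortNF

instance isShortNF_Wℝ (a b : ℝ) : (Wℝ a b).IsShortNF := ⟨rfl, rfl, rfl⟩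

theorem Wℝ_Δ (a b : ℝ) : (Wℝ a b).Δ = -16 * (4 * a ^ 3 + 27 * b ^ 2) := by
  simp only [Wℝ, WeierstrassCurve.Δ, WeierstrassCurve.b₂, WeierstrassCurve.b₄, WeierstrassCurve.b₆,
    WeierstrassCurve.b₈]
  ring

theorem Wℝ_nonsingular_of_root {a b r : ℝ} (hΔ : 4 * a ^ 3 + 27 * b ^ 2 ≠ 0)
    (hr : r ^ 3 + a * r + b = 0) : (Wℝ a b).Nonsingular r 0 := by
  refine (equation_iff_nonsingular_of_Δ_ne_zero (by rw [Wℝ_Δ]; simpa using hΔ)).mp ?_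
  rw [equation_iff]
  simp only [Wℝ]
  linear_combination -hr

theorem exists_point_not_twice_general (a b : ℝ) (hΔ : 4 * a ^ 3 + 27 * b ^ 2 ≠ 0)
    (r₁ r₂ r₃ : ℝ) (h12 : r₁ ≠ r₂)
    (hroots : ∀ x : ℝ, x ^ 3 + a * x + b = (x - r₁) * (x - r₂) * (x - r₃)) :
    ∃ w : (Wℝ a b).Point, ∀ w2 : (Wℝ a b).Point, w ≠ 2 • w2 := by
  have hr₁ : r₁ ^ 3 + a * r₁ + b = 0 := by linear_combination hroots r₁
  have hr₂ : r₂ ^ 3 + a * r₂ + b = 0 := by linear_combination hroots r₂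
  by_contra! hcon
  obtain ⟨P₁, hP₁⟩ := hcon (Point.some _ _ (Wℝ_nonsingular_of_root hΔ hr₁))
  obtain ⟨P₂, hP₂⟩ := hcon (Point.some _ _ (Wℝ_nonsingular_of_root hΔ hr₂))
  exact h12 <|
    le_antisymm (root_le_of_some_eq_two_smul hr₁ hP₂) (root_le_of_some_eq_two_smul hr₂ hP₁)

/-- **Lemma (L:w).** Let `E : Y² = X³ + aX + b` with `a, b ∈ ℝ`, and suppose that
`X³ + aX + b` has three distinct real roots. Then there is `w ∈ E(ℝ)` such that there is
no `w2 ∈ E(ℝ)` with `w = 2w2`. -/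
theorem exists_point_not_twice (a b : ℝ) (hΔ : 4 * a ^ 3 + 27 * b ^ 2 ≠ 0)
    (r₁ r₂ r₃ : ℝ) (h12 : r₁ ≠ r₂) (h13 : r₁ ≠ r₃) (h23 : r₂ ≠ r₃)
    (hroots : ∀ x : ℝ, x ^ 3 + a * x + b = (x - r₁) * (x - r₂) * (x - r₃)) :
    ∃ w : (Wℝ a b).Point, ∀ w2 : (Wℝ a b).Point, w ≠ 2 • w2 :=
  exists_point_not_twice_general a b hΔ r₁ r₂ r₃ h12 hroots
end

section
/- Suppose that f ∘ g ∈ ℝ(z), where f ∈ ℂ(z) is a nonconstant rational function and g ∈ ℂ[z] is a nonconstant polynomial. Then λ ∘ g ∈ ℝ[z] for some linear polynomial λ(z) = az + b ∈ ℂ[z] with a ≠ 0. -/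
/-!
Let `σ` be complex conjugation and `f = p / q` in lowest terms. The composites `p ∘ g`, `q ∘ g`
are still coprime, so reality of `f ∘ g = (p ∘ g) / (q ∘ g)` forces `(p ∘ g)^σ = c • (p ∘ g)`,
and likewise for `q`. Taking whichever of `p`, `q` is nonconstant, this is an identity
`u ∘ g^σ = v ∘ g` with `u` nonconstant. After an affine change absorbed into `u` and `v`, the
inner polynomials are monic with zero constant term, and then they must coincide: if `g ≠ h`
have degree `m` and `u ∘ g = v ∘ h` with `deg u = n`, the leading terms cancel in
`lc(u) (gⁿ - hⁿ) = (v - lead v) ∘ h - (u - lead u) ∘ g`, whose right side has degree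
`≤ (n - 1) m`, while `gⁿ - hⁿ = (g - h) ∑ gⁱ hⁿ⁻¹⁻ⁱ` has degree `(n - 1) m + deg (g - h)` in
characteristic zero. So `g - h` is a constant, hence zero.
-/

open scoped Polynomial

noncomputable section

/-- A rational function over `ℂ` has real coefficients (i.e. lies in `ℝ(z)`). -/
def RatFunc.IsReal (f : RatFunc ℂ) : Prop :=
  (∀ n, (f.num.coeff n).im = 0) ∧ (∀ n, (f.denom.coeff n).im = 0)

/-- Composition `f ∘ g` of rational functions (substitution of `g` into `f`). -/
def RatFunc.comp' (f g : RatFunc ℂ) : RatFunc ℂ :=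
  RatFunc.eval (algebraMap ℂ (RatFunc ℂ)) g f

namespace Polynomial

section Semiring

variable {R : Type*} [CommSemiring R]

theorem natDegree_pow_mul_pow_of_monic {g h : R[X]} (hg : g.Monic) (hh : h.Monic)
    (hgh : g.natDegree = h.natDegree) (i j : ℕ) :
    (g ^ i * h ^ j).natDegree = (i + j) * g.natDegree := by
  rw [(hg.pow i).natDegree_mul (hh.pow j), hg.natDegree_pow, hh.natDegree_pow, ← hgh, add_mul]

theorem coeff_geom_sum₂_of_monic {g h : R[X]} (hg : g.Monic) (hh : h.Monic)
    (hgh : g.natDegree = h.natDegree) (n : ℕ) :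
    (∑ i ∈ Finset.range n, g ^ i * h ^ (n - 1 - i)).coeff ((n - 1) * g.natDegree) = n := by
  have hterm : ∀ i ∈ Finset.range n,
      (g ^ i * h ^ (n - 1 - i)).coeff ((n - 1) * g.natDegree) = 1 := by
    intro i hi
    have hi' : i + (n - 1 - i) = n - 1 := by rw [Finset.mem_range] at hi; omega
    rw [← ((hg.pow i).mul (hh.pow _)).coeff_natDegree, natDegree_pow_mul_pow_of_monic hg hh hgh,
      hi']
  rw [finsetSum_coeff, Finset.sum_congr rfl hterm]
  simp

end Semiring

section Domain

variable {R : Type*} [CommRing R] [IsDomain R]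

theorem comp_ne_zero {p q : R[X]} (hp : p ≠ 0) (hq : 0 < q.natDegree) : p.comp q ≠ 0 := by
  rw [Ne, comp_eq_zero_iff, not_or, not_and_or]
  exact ⟨hp, Or.inr fun h => by rw [h, natDegree_C] at hq; exact lt_irrefl _ hq⟩

theorem exists_eq_C_mul_of_dvd_of_natDegree_le {p q : R[X]} (hpq : p ∣ q)
    (hdeg : q.natDegree ≤ p.natDegree) : ∃ c, q = C c * p := by
  obtain ⟨k, rfl⟩ := hpq
  rcases eq_or_ne p 0 with rfl | hp
  · exact ⟨0, by simp⟩
  rcases eq_or_ne k 0 with rfl | hk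
  · exact ⟨0, by simp⟩
  rw [natDegree_mul hp hk] at hdeg
  exact ⟨k.coeff 0, by rw [mul_comm, ← eq_C_of_natDegree_eq_zero (by omega)]⟩

theorem mul_map_eq_map_mul_of_mul_eq (σ : R →+* R) {P Q N D : R[X]} (hD : D ≠ 0)
    (hN : N.map σ = N) (hD' : D.map σ = D) (h : N * Q = P * D) :
    P * Q.map σ = P.map σ * Q := by
  have hσ : N * Q.map σ = P.map σ * D := by
    simpa only [Polynomial.map_mul, hN, hD'] using congrArg (map σ) h
  apply mul_right_cancel₀ hD
  linear_combination Q * hσ - Q.map σ * h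

variable [CharZero R]

theorem natDegree_pow_sub_pow_of_monic {g h : R[X]} (hg : g.Monic) (hh : h.Monic)
    (hgh : g.natDegree = h.natDegree) (hne : g ≠ h) {n : ℕ} (hn : 0 < n) :
    (g ^ n - h ^ n).natDegree = (n - 1) * g.natDegree + (g - h).natDegree := by
  set S := ∑ i ∈ Finset.range n, g ^ i * h ^ (n - 1 - i)
  have hcoeff : S.coeff ((n - 1) * g.natDegree) ≠ 0 := by
    rw [coeff_geom_sum₂_of_monic hg hh hgh]
    exact Nat.cast_ne_zero.2 hn.ne'
  have hS : S.natDegree = (n - 1) * g.natDegree := by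
    refine le_antisymm (natDegree_sum_le_of_forall_le _ _ fun i hi => ?_)
      (le_natDegree_of_ne_zero hcoeff)
    rw [Finset.mem_range] at hi
    rw [natDegree_pow_mul_pow_of_monic hg hh hgh]
    exact Nat.mul_le_mul_right _ (by omega)
  have hS0 : S ≠ 0 := fun h0 => hcoeff (by rw [h0, coeff_zero])
  rw [← geom_sum₂_mul, natDegree_mul hS0 (sub_ne_zero.2 hne), hS]

theorem eq_of_comp_eq_comp_of_monic {u v g h : R[X]} (hg : g.Monic) (hh : h.Monic)
    (hgh : g.natDegree = h.natDegree) (hg0 : 0 < g.natDegree) (hcoeff : g.coeff 0 = h.coeff 0)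
    (hu : 0 < u.natDegree) (hcomp : u.comp g = v.comp h) : g = h := by
  have hvu : v.natDegree = u.natDegree := by
    have := congrArg natDegree hcomp
    rw [natDegree_comp, natDegree_comp, ← hgh] at this
    exact (Nat.eq_of_mul_eq_mul_right hg0 this).symm
  have hlc : v.leadingCoeff = u.leadingCoeff := by
    have := congrArg leadingCoeff hcomp
    rwa [leadingCoeff_comp hg0.ne', leadingCoeff_comp (hgh ▸ hg0.ne'), hg.leadingCoeff,
      hh.leadingCoeff, one_pow, one_pow, mul_one, mul_one, eq_comm] at this
  have hdiff : C u.leadingCoeff * (g ^ u.natDegree - h ^ u.natDegree) =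
      v.eraseLead.comp h - u.eraseLead.comp g := by
    have hu' := congrArg (comp · g) u.eraseLead_add_C_mul_X_pow
    have hv' := congrArg (comp · h) v.eraseLead_add_C_mul_X_pow
    simp only [add_comp, mul_comp, C_comp, X_pow_comp, hvu, hlc] at hu' hv'
    linear_combination hu' - hv' + hcomp
  have hbound : (v.eraseLead.comp h - u.eraseLead.comp g).natDegree ≤
      (u.natDegree - 1) * g.natDegree := by
    refine (natDegree_sub_le _ _).trans (max_le ?_ ?_) <;> rw [natDegree_comp]
    · rw [← hgh, ← hvu]; exact Nat.mul_le_mul_right _ (eraseLead_natDegree_le v)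
    · exact Nat.mul_le_mul_right _ (eraseLead_natDegree_le u)
  by_contra hne
  rw [← hdiff, natDegree_C_mul (leadingCoeff_ne_zero.2 (ne_zero_of_natDegree_gt hu)),
    natDegree_pow_sub_pow_of_monic hg hh hgh hne hu] at hbound
  have hconst : (g - h).natDegree = 0 := by omega
  exact hne <| sub_eq_zero.1 <| by
    rw [eq_C_of_natDegree_eq_zero hconst, coeff_sub, hcoeff, sub_self, C_0]

end Domain

section Field

variable {K : Type*} [Field K]

def affineNormalize (g : K[X]) : K[X] :=
  C g.leadingCoeff⁻¹ * (g - C (g.coeff 0))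

theorem affineNormalize_eq (g : K[X]) :
    g.affineNormalize = C g.leadingCoeff⁻¹ * g + C (-(g.leadingCoeff⁻¹ * g.coeff 0)) := by
  rw [affineNormalize, mul_sub, ← C_mul, map_neg, sub_eq_add_neg]

theorem natDegree_affineNormalize {g : K[X]} (hg : g ≠ 0) :
    g.affineNormalize.natDegree = g.natDegree := by
  rw [affineNormalize, natDegree_C_mul (inv_ne_zero (leadingCoeff_ne_zero.2 hg)), natDegree_sub_C]

theorem monic_affineNormalize {g : K[X]} (hg : 0 < g.natDegree) : g.affineNormalize.Monic := by
  have hg0 := ne_zero_of_natDegree_gt hg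
  rw [Monic, leadingCoeff, natDegree_affineNormalize hg0, affineNormalize, coeff_C_mul, coeff_sub,
    coeff_C, if_neg hg.ne', sub_zero, coeff_natDegree, inv_mul_cancel₀ (leadingCoeff_ne_zero.2 hg0)]

theorem coeff_zero_affineNormalize (g : K[X]) : g.affineNormalize.coeff 0 = 0 := by
  simp [affineNormalize]

theorem comp_affineNormalize {g : K[X]} (hg : g ≠ 0) :
    (C g.leadingCoeff * X + C (g.coeff 0)).comp g.affineNormalize = g := by
  rw [affineNormalize, add_comp, mul_comp, C_comp, X_comp, C_comp, ← mul_assoc, ← C_mul,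
    mul_inv_cancel₀ (leadingCoeff_ne_zero.2 hg), C_1, one_mul, sub_add_cancel]

theorem map_affineNormalize {L : Type*} [Field L] (σ : K →+* L) (g : K[X]) :
    g.affineNormalize.map σ = (g.map σ).affineNormalize := by
  simp [affineNormalize, leadingCoeff_map, coeff_map]

theorem exists_map_eq_C_mul_of_isCoprime (σ : K →+* K) {P Q : K[X]} (hPQ : IsCoprime P Q)
    (h : P * Q.map σ = P.map σ * Q) : ∃ c, P.map σ = C c * P :=
  exists_eq_C_mul_of_dvd_of_natDegree_le (hPQ.dvd_of_dvd_mul_right ⟨Q.map σ, h.symm⟩)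
    (natDegree_map σ).le

variable [CharZero K]

theorem affineNormalize_eq_of_comp_eq_comp {u v g h : K[X]} (hu : 0 < u.natDegree)
    (hg : 0 < g.natDegree) (hgh : g.natDegree = h.natDegree) (hcomp : u.comp g = v.comp h) :
    g.affineNormalize = h.affineNormalize := by
  have hg0 := ne_zero_of_natDegree_gt hg
  have hh0 := ne_zero_of_natDegree_gt (hgh ▸ hg)
  refine eq_of_comp_eq_comp_of_monic (u := u.comp (C g.leadingCoeff * X + C (g.coeff 0)))
    (v := v.comp (C h.leadingCoeff * X + C (h.coeff 0))) (monic_affineNormalize hg)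
    (monic_affineNormalize (hgh ▸ hg))
    (by rw [natDegree_affineNormalize hg0, natDegree_affineNormalize hh0, hgh])
    (by rwa [natDegree_affineNormalize hg0])
    (by rw [coeff_zero_affineNormalize, coeff_zero_affineNormalize]) ?_ ?_
  · rwa [natDegree_comp, natDegree_linear (leadingCoeff_ne_zero.2 hg0), mul_one]
  · rw [comp_assoc, comp_assoc, comp_affineNormalize hg0, comp_affineNormalize hh0, hcomp]

theorem affineNormalize_map_eq_of_map_comp_eq_C_mul (σ : K →+* K) {r g : K[X]} {c : K}
    (hr : 0 < r.natDegree) (hg : 0 < g.natDegree) (h : (r.comp g).map σ = C c * r.comp g) :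
    (g.map σ).affineNormalize = g.affineNormalize :=
  affineNormalize_eq_of_comp_eq_comp (u := r.map σ) (v := C c * r) (by rwa [natDegree_map])
    (by rwa [natDegree_map]) (natDegree_map σ) (by rw [← map_comp, h, mul_comp, C_comp])

end Field

theorem map_conj_eq_self_iff {p : ℂ[X]} :
    p.map (starRingEnd ℂ) = p ↔ ∀ n, (p.coeff n).im = 0 := by
  simp only [Polynomial.ext_iff, coeff_map, Complex.conj_eq_iff_im]

end Polynomial

namespace RatFunc

open Polynomial

theorem comp'_algebraMap (f : RatFunc ℂ) (g : ℂ[X]) :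
    f.comp' (algebraMap ℂ[X] (RatFunc ℂ) g) =
      algebraMap ℂ[X] (RatFunc ℂ) (f.num.comp g) /
        algebraMap ℂ[X] (RatFunc ℂ) (f.denom.comp g) := by
  simp only [comp', RatFunc.eval, ← aeval_def, aeval_algebraMap_apply, ← comp_eq_aeval]

theorem natDegree_num_pos_or_natDegree_denom_pos {K : Type*} [Field K] {f : RatFunc K}
    (hf : ∀ c, f ≠ C c) : 0 < f.num.natDegree ∨ 0 < f.denom.natDegree := by
  by_contra! h
  have hf' := f.num_div_denom
  rw [eq_C_of_natDegree_eq_zero (Nat.le_zero.1 h.1),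
    f.monic_denom.natDegree_eq_zero.1 (Nat.le_zero.1 h.2)] at hf'
  exact hf (f.num.coeff 0) (by rw [← hf']; simp [algebraMap_C])

end RatFunc

/-- **Lemma.** Suppose `f ∘ g ∈ ℝ(z)` where `f ∈ ℂ(z)` is a nonconstant rational function
and `g ∈ ℂ[z]` is a nonconstant polynomial. Then `λ ∘ g ∈ ℝ[z]` for some linear polynomial
`λ(z) = az + b ∈ ℂ[z]`, `a ≠ 0`. -/
theorem poly_inner_factor_real (f : RatFunc ℂ) (hf : ∀ c : ℂ, f ≠ RatFunc.C c)
    (g : ℂ[X]) (hg : 0 < g.natDegree)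
    (hreal : (RatFunc.comp' f (algebraMap ℂ[X] (RatFunc ℂ) g)).IsReal) :
    ∃ a b : ℂ, a ≠ 0 ∧ ∀ n, ((Polynomial.C a * g + Polynomial.C b).coeff n).im = 0 := by
  open Polynomial in
  set σ := starRingEnd ℂ
  have hcop : IsCoprime (f.num.comp g) (f.denom.comp g) :=
    f.isCoprime_num_denom.map (compRingHom g)
  have hcross : f.num.comp g * (f.denom.comp g).map σ = (f.num.comp g).map σ * f.denom.comp g :=
    mul_map_eq_map_mul_of_mul_eq σ (RatFunc.denom_ne_zero _) (map_conj_eq_self_iff.2 hreal.1)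
      (map_conj_eq_self_iff.2 hreal.2)
      ((RatFunc.num_mul_eq_mul_denom_iff (comp_ne_zero f.denom_ne_zero hg)).2
        (f.comp'_algebraMap g))
  have hnormal : (g.map σ).affineNormalize = g.affineNormalize := by
    rcases f.natDegree_num_pos_or_natDegree_denom_pos hf with hnum | hden
    · obtain ⟨c, hc⟩ := exists_map_eq_C_mul_of_isCoprime σ hcop hcross
      exact affineNormalize_map_eq_of_map_comp_eq_C_mul σ hnum hg hc
    · obtain ⟨c, hc⟩ := exists_map_eq_C_mul_of_isCoprime σ hcop.symm
        (by rw [mul_comm, ← hcross, mul_comm])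
      exact affineNormalize_map_eq_of_map_comp_eq_C_mul σ hden hg hc
  refine ⟨g.leadingCoeff⁻¹, -(g.leadingCoeff⁻¹ * g.coeff 0),
    inv_ne_zero (leadingCoeff_ne_zero.2 (ne_zero_of_natDegree_gt hg)), ?_⟩
  rw [← affineNormalize_eq, ← map_conj_eq_self_iff, map_affineNormalize, hnormal]

end
end

section
/- Let 1 ≤ k < n be integers and ζ ∈ ℂ with |ζ| = 1. Set F(z) = z^k(1 − z)^{n−k} and G(z) = (1 − ζz^k)/(1 − ζz^n). Then F(Ḡ(1/z)) = ζ^{−(n−k)} · F(G(z)) as rational functions, where Ḡ denotes the rational function whose coefficients are the complex conjugates of those of G. -/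
/-!
Since `|ζ| = 1`, `Ḡ(1/z)` is `G` with `(ζ, z)` replaced by `(ζ⁻¹, z⁻¹)`, and this substitution
turns `G = (1 - ζ zᵏ)/(1 - ζ zⁿ)` into `zᵐ G`, where `m = n - k`. With `u = (1 - zᵐ)/(1 - ζ zⁿ)`
one has `1 - zᵐ G = u` and `1 - G = ζ zᵏ u`, hence `F(zᵐ G) = zᵏᵐ Gᵏ uᵐ = ζ⁻ᵐ F(G)`.
-/

section Field

variable {K : Type*} [Field K] {c x : K}

def ratioG (c x : K) (k n : ℕ) : K := (1 - c * x ^ k) / (1 - c * x ^ n)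

def polyF (k m : ℕ) (w : K) : K := w ^ k * (1 - w) ^ m

theorem ratioG_inv_inv (hc : c ≠ 0) (hx : x ≠ 0) (k m : ℕ) :
    ratioG c⁻¹ x⁻¹ k (k + m) = x ^ m * ratioG c x k (k + m) := by
  have h : ∀ j : ℕ, 1 - c⁻¹ * x⁻¹ ^ j = -(c * x ^ j)⁻¹ * (1 - c * x ^ j) := fun j => by
    rw [inv_pow, ← mul_inv, neg_mul, mul_sub, mul_one, inv_mul_cancel₀ (by positivity)]
    ring
  rw [ratioG, ratioG, h, h, neg_mul, neg_mul, neg_div_neg_eq, mul_div_mul_comm]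
  congr 1
  field_simp
  ring

theorem one_sub_pow_mul_ratioG (h : 1 - c * x ^ (k + m) ≠ 0) :
    1 - x ^ m * ratioG c x k (k + m) = (1 - x ^ m) / (1 - c * x ^ (k + m)) := by
  rw [ratioG]
  field_simp
  ring

theorem one_sub_ratioG (h : 1 - c * x ^ (k + m) ≠ 0) :
    1 - ratioG c x k (k + m) = c * x ^ k * ((1 - x ^ m) / (1 - c * x ^ (k + m))) := by
  rw [ratioG]
  field_simp
  ring

theorem polyF_ratioG_inv_inv (hc : c ≠ 0) (hx : x ≠ 0) (h : 1 - c * x ^ (k + m) ≠ 0) :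
    polyF k m (ratioG c⁻¹ x⁻¹ k (k + m)) = (c ^ m)⁻¹ * polyF k m (ratioG c x k (k + m)) := by
  rw [polyF, polyF, ratioG_inv_inv hc hx, one_sub_pow_mul_ratioG h, one_sub_ratioG h, mul_pow,
    mul_pow, mul_pow, ← pow_mul, ← pow_mul, mul_comm k m]
  field_simp

end Field

theorem RatFunc.one_sub_C_mul_X_pow_ne_zero {F : Type*} [Field F] (c : F) {n : ℕ} (hn : n ≠ 0) :
    (1 - RatFunc.C c * RatFunc.X ^ n : RatFunc F) ≠ 0 := by
  rw [← RatFunc.algebraMap_C, ← RatFunc.algebraMap_X, ← map_pow, ← map_mul, ← map_one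
    (algebraMap (Polynomial F) (RatFunc F)), ← map_sub, ne_eq, FaithfulSMul.algebraMap_eq_zero_iff]
  intro h0
  simpa [Polynomial.coeff_X_pow, hn.symm] using congrArg (Polynomial.coeff · 0) h0

theorem FG_identity_general (n k : ℕ) (hkn : k < n) (ζ : ℂ) (hζ : ‖ζ‖ = 1) :
    ((1 - RatFunc.C ((starRingEnd ℂ) ζ) * (RatFunc.X⁻¹) ^ k) /
        (1 - RatFunc.C ((starRingEnd ℂ) ζ) * (RatFunc.X⁻¹) ^ n)) ^ k *
      (1 - (1 - RatFunc.C ((starRingEnd ℂ) ζ) * (RatFunc.X⁻¹) ^ k) /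
        (1 - RatFunc.C ((starRingEnd ℂ) ζ) * (RatFunc.X⁻¹) ^ n)) ^ (n - k) =
    RatFunc.C ((ζ ^ (n - k))⁻¹) *
      (((1 - RatFunc.C ζ * RatFunc.X ^ k) / (1 - RatFunc.C ζ * RatFunc.X ^ n)) ^ k *
        (1 - (1 - RatFunc.C ζ * RatFunc.X ^ k) /
          (1 - RatFunc.C ζ * RatFunc.X ^ n)) ^ (n - k)) := by
  have hζ0 : ζ ≠ 0 := norm_ne_zero_iff.mp (hζ ▸ one_ne_zero)
  have hconj : (starRingEnd ℂ) ζ = ζ⁻¹ := (Complex.inv_eq_conj hζ).symm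
  obtain ⟨m, rfl⟩ := Nat.exists_eq_add_of_le hkn.le
  rw [Nat.add_sub_cancel_left, hconj, map_inv₀, map_inv₀, map_pow]
  exact polyF_ratioG_inv_inv (by simpa using hζ0) RatFunc.X_ne_zero
    (RatFunc.one_sub_C_mul_X_pow_ne_zero ζ (by omega))

/-- **Equation (e:FG).** For `1 ≤ k < n`, `|ζ| = 1`, `F(z) = z^k (1-z)^{n-k}` and
`G(z) = (1 - ζ z^k)/(1 - ζ z^n)`, we have `F(Ḡ(1/z)) = ζ^{-(n-k)} F(G(z))` in `ℂ(z)`. -/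
theorem FG_identity (n k : ℕ) (hk : 1 ≤ k) (hkn : k < n) (ζ : ℂ) (hζ : ‖ζ‖ = 1) :
    ((1 - RatFunc.C ((starRingEnd ℂ) ζ) * (RatFunc.X⁻¹) ^ k) /
        (1 - RatFunc.C ((starRingEnd ℂ) ζ) * (RatFunc.X⁻¹) ^ n)) ^ k *
      (1 - (1 - RatFunc.C ((starRingEnd ℂ) ζ) * (RatFunc.X⁻¹) ^ k) /
        (1 - RatFunc.C ((starRingEnd ℂ) ζ) * (RatFunc.X⁻¹) ^ n)) ^ (n - k) =
    RatFunc.C ((ζ ^ (n - k))⁻¹) *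
      (((1 - RatFunc.C ζ * RatFunc.X ^ k) / (1 - RatFunc.C ζ * RatFunc.X ^ n)) ^ k *
        (1 - (1 - RatFunc.C ζ * RatFunc.X ^ k) /
          (1 - RatFunc.C ζ * RatFunc.X ^ n)) ^ (n - k)) :=
  FG_identity_general n k hkn ζ hζ
end

section
/- Let h ∈ ℂ[z] be a nonconstant polynomial and suppose h = f ∘ g for nonconstant rational functions f, g ∈ ℂ(z). Then there is a linear fractional function ρ ∈ ℂ(z) such that f ∘ ρ⁻¹ and ρ ∘ g are both polynomials. -/
/-
Write `f = P / Q` and `g = u / v` in lowest terms with `Q`, `v` monic, and let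
`N = max (deg P) (deg Q)`. The homogenizations `H_P = v ^ N * P (u / v)` and
`H_Q = v ^ N * Q (u / v)` (`MvPolynomial.aeval ![u, v] (P.homogenize N)` below) have no common
zero, and `h * H_Q = H_P`; hence `H_Q` is a nonzero constant. At a zero of `v` this forces
`Q.coeff N ≠ 0`, so `deg P ≤ deg Q` once `v` is nonconstant; at a zero of `u - w * v` with `w` a
pole of `f` it would give `H_Q = v ^ N * Q w = 0`, so `u - w * v` is a constant `e`.
If `Q = 1`, then `v` must be constant as `f` is not, and `ρ = id` works. Otherwise `v` is
nonconstant, the pole `w` is unique, `Q = (X - w) ^ q` with `deg P ≤ q`, and `ρ z = 1 / (z - w)`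
works: `ρ ∘ g = v / e` and `f ∘ ρ⁻¹ = X ^ q * P (w + 1 / X)`.
-/

open scoped Polynomial

noncomputable section

open Polynomial

namespace Polynomial

theorem eval_homogenize_of_eq_zero {R : Type*} [CommSemiring R] (p : R[X]) (n : ℕ)
    (x : Fin 2 → R) (hx : x 1 = 0) :
    MvPolynomial.eval x (p.homogenize n) = p.coeff n * x 0 ^ n := by
  rw [homogenize, MvPolynomial.eval_sum, Finset.sum_eq_single (n, 0)]
  · simp [MvPolynomial.eval_monomial, Finsupp.prod_fintype]
  · rintro ⟨k, l⟩ hkl hne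
    have hl : l ≠ 0 := by rintro rfl; simp_all
    simp [MvPolynomial.eval_monomial, Finsupp.prod_fintype, hx, hl]
  · simp

theorem eval_mvPolynomial_aeval {σ R : Type*} [CommSemiring R] (x : σ → R[X])
    (F : MvPolynomial σ R) (z : R) :
    (MvPolynomial.aeval x F).eval z = MvPolynomial.eval (fun i => (x i).eval z) F := by
  rw [← coe_aeval_eq_eval, MvPolynomial.comp_aeval_apply]
  simp

theorem coeff_max_natDegree_ne_zero {R : Type*} [Semiring R] {p q : R[X]} (hq : q ≠ 0) :
    p.coeff (max p.natDegree q.natDegree) ≠ 0 ∨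
      q.coeff (max p.natDegree q.natDegree) ≠ 0 := by
  rcases eq_or_ne p 0 with rfl | hp
  · simp [hq]
  rcases max_choice p.natDegree q.natDegree with h | h <;> rw [h]
  · exact .inl (leadingCoeff_ne_zero.mpr hp)
  · exact .inr (leadingCoeff_ne_zero.mpr hq)

theorem coeff_ne_zero_of_isUnit_aeval_homogenize {R : Type*} [CommSemiring R] [Nontrivial R]
    {q u v : R[X]} {n : ℕ} {z : R} (hunit : IsUnit (MvPolynomial.aeval ![u, v] (q.homogenize n)))
    (hz : v.IsRoot z) : q.coeff n ≠ 0 := by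
  intro h0
  apply (hunit.map (evalRingHom z)).ne_zero
  rw [coe_evalRingHom, eval_mvPolynomial_aeval,
    eval_homogenize_of_eq_zero _ _ _ (by simpa using hz), h0, zero_mul]

variable {K : Type*} [Field K]

theorem aeval_homogenize {L : Type*} [Field L] [Algebra K L] {p : K[X]} {n : ℕ}
    (hn : p.natDegree ≤ n) (x : Fin 2 → L) (hx : x 1 ≠ 0) :
    MvPolynomial.aeval x (p.homogenize n) = aeval (x 0 / x 1) p * x 1 ^ n := by
  rw [MvPolynomial.aeval_def, ← MvPolynomial.eval_map, ← homogenize_map,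
    eval_homogenize (natDegree_map_le.trans hn) x hx, eval_map_algebraMap]

variable [IsAlgClosed K]

theorem isUnit_of_forall_eval_ne_zero {p : K[X]} (hp : ∀ z, p.eval z ≠ 0) : IsUnit p :=
  isUnit_iff_degree_eq_zero.mpr <| by_contra fun h =>
    let ⟨z, hz⟩ := IsAlgClosed.exists_root p h
    hp z hz

theorem eq_X_sub_C_pow_of_forall_isRoot_eq {p : K[X]} (hp : p.Monic) {w : K}
    (h : ∀ z, p.IsRoot z → z = w) : p = (X - C w) ^ p.natDegree := by
  have hroots : p.roots = Multiset.replicate p.natDegree w :=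
    Multiset.eq_replicate.mpr
      ⟨IsAlgClosed.card_roots_eq_natDegree, fun z hz => h z (isRoot_of_mem_roots hz)⟩
  conv_lhs => rw [(IsAlgClosed.splits p).eq_prod_roots_of_monic hp, hroots]
  simp

theorem isCoprime_aeval_homogenize {p q u v : K[X]} {n : ℕ} (hpq : IsCoprime p q)
    (huv : IsCoprime u v) (hp : p.natDegree ≤ n) (hq : q.natDegree ≤ n)
    (hn : p.coeff n ≠ 0 ∨ q.coeff n ≠ 0) :
    IsCoprime (MvPolynomial.aeval ![u, v] (p.homogenize n))
      (MvPolynomial.aeval ![u, v] (q.homogenize n)) := by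
  rw [isCoprime_iff_aeval_ne_zero_of_isAlgClosed K K]
  intro z
  simp only [coe_aeval_eq_eval, eval_mvPolynomial_aeval]
  by_cases hv : v.eval z = 0
  · have hu : u.eval z ≠ 0 := by simpa [hv] using aeval_ne_zero_of_isCoprime huv z
    rw [eval_homogenize_of_eq_zero _ _ _ (by simpa using hv),
      eval_homogenize_of_eq_zero _ _ _ (by simpa using hv)]
    simpa [hu] using hn
  · rw [eval_homogenize hp _ (by simpa using hv), eval_homogenize hq _ (by simpa using hv)]
    simpa [hv] using aeval_ne_zero_of_isCoprime hpq (u.eval z / v.eval z)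

theorem isUnit_sub_C_mul_of_isUnit_aeval_homogenize {q u v : K[X]} {n : ℕ} {w : K}
    (hunit : IsUnit (MvPolynomial.aeval ![u, v] (q.homogenize n))) (huv : IsCoprime u v)
    (hq : q.natDegree ≤ n) (hw : q.IsRoot w) : IsUnit (u - C w * v) := by
  refine isUnit_of_forall_eval_ne_zero fun z hz => ?_
  have hv : v.eval z ≠ 0 := by
    intro hv
    have hu : u.eval z = 0 := by simpa [hv, sub_eq_zero] using hz
    simpa [hu, hv] using aeval_ne_zero_of_isCoprime huv z
  have hwz : u.eval z / v.eval z = w := by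
    rw [div_eq_iff hv]; simpa [sub_eq_zero] using hz
  apply (hunit.map (evalRingHom z)).ne_zero
  rw [coe_evalRingHom, eval_mvPolynomial_aeval, eval_homogenize hq _ (by simpa using hv)]
  simp [hwz, hw.eq_zero]

end Polynomial

namespace RatFunc

variable {K : Type*} [Field K]

theorem algebraMap_aeval_homogenize {p : K[X]} {n : ℕ} (hn : p.natDegree ≤ n) (u : K[X])
    {v : K[X]} (hv : v ≠ 0) :
    algebraMap K[X] (RatFunc K) (MvPolynomial.aeval ![u, v] (p.homogenize n)) =
      aeval (algebraMap K[X] (RatFunc K) u / algebraMap K[X] (RatFunc K) v) p *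
        algebraMap K[X] (RatFunc K) v ^ n := by
  rw [← IsScalarTower.coe_toAlgHom' K, MvPolynomial.comp_aeval_apply, aeval_homogenize hn]
  · simp
  · simpa using algebraMap_ne_zero hv

theorem eq_algebraMap_num_of_denom_eq_one {x : RatFunc K} (hx : x.denom = 1) :
    x = algebraMap K[X] (RatFunc K) x.num := by
  conv_lhs => rw [← num_div_denom x, hx, map_one, div_one]

theorem eval_X_left (f : RatFunc K) : eval (algebraMap K (RatFunc K)) X f = f := by
  rw [eval, ← aeval_def, ← aeval_def, aeval_X_left_eq_algebraMap, aeval_X_left_eq_algebraMap,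
    num_div_denom]

theorem one_div_sub_C_eq {g : RatFunc K} {w e : K}
    (hg : g.num - Polynomial.C w * g.denom = Polynomial.C e) :
    1 / (g - C w) = algebraMap K[X] (RatFunc K) (Polynomial.C e⁻¹ * g.denom) := by
  have hg' := congrArg (algebraMap K[X] (RatFunc K)) hg
  simp only [map_sub, map_mul, algebraMap_C] at hg'
  have hD := algebraMap_ne_zero (denom_ne_zero g)
  conv_lhs => rw [← num_div_denom g]
  rw [map_mul, algebraMap_C, div_sub' hD, mul_comm, hg', one_div_div, map_inv₀]
  ring

theorem eval_C_add_inv_X {f : RatFunc K} {w : K} {q : ℕ}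
    (hf : f.denom = (Polynomial.X - Polynomial.C w) ^ q) (hpq : f.num.natDegree ≤ q) :
    eval (algebraMap K (RatFunc K)) (C w + X⁻¹) f =
      algebraMap K[X] (RatFunc K)
        (MvPolynomial.aeval ![Polynomial.C w * Polynomial.X + 1, Polynomial.X]
          (f.num.homogenize q)) := by
  have hρ : algebraMap K[X] (RatFunc K) (Polynomial.C w * Polynomial.X + 1) /
      algebraMap K[X] (RatFunc K) Polynomial.X = C w + X⁻¹ := by
    have hX := X_ne_zero (K := K)
    simp only [map_add, map_mul, map_one, algebraMap_C, algebraMap_X]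
    field_simp
  rw [algebraMap_aeval_homogenize hpq _ Polynomial.X_ne_zero, hρ, eval, ← aeval_def,
    ← aeval_def, hf]
  simp [algebraMap_eq_C, algebraMap_X]

variable [IsAlgClosed K] {f g : RatFunc K} {h : K[X]}

theorem isUnit_aeval_homogenize_denom (hh : h ≠ 0)
    (hfg : algebraMap K[X] (RatFunc K) h = eval (algebraMap K (RatFunc K)) g f) :
    IsUnit (MvPolynomial.aeval ![g.num, g.denom]
      (f.denom.homogenize (max f.num.natDegree f.denom.natDegree))) := by
  set N := max f.num.natDegree f.denom.natDegree
  have hP := algebraMap_aeval_homogenize (le_max_left _ _ : f.num.natDegree ≤ N) g.num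
    (denom_ne_zero g)
  have hQ := algebraMap_aeval_homogenize (le_max_right _ _ : f.denom.natDegree ≤ N) g.num
    (denom_ne_zero g)
  rw [num_div_denom] at hP hQ
  rw [eval, ← aeval_def, ← aeval_def] at hfg
  have hfQ : aeval g f.denom ≠ 0 := fun h0 =>
    hh <| algebraMap_injective K (by simp [hfg, h0])
  have hD := algebraMap_ne_zero (denom_ne_zero g)
  have hdvd : MvPolynomial.aeval ![g.num, g.denom] (f.denom.homogenize N) ∣
      MvPolynomial.aeval ![g.num, g.denom] (f.num.homogenize N) :=
    ⟨h, algebraMap_injective K <| by rw [map_mul, hP, hQ, hfg]; field_simp⟩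
  exact (isCoprime_aeval_homogenize (isCoprime_num_denom f) (isCoprime_num_denom g)
    (le_max_left _ _) (le_max_right _ _) (coeff_max_natDegree_ne_zero (denom_ne_zero f))
    ).isUnit_of_dvd' hdvd dvd_rfl

theorem natDegree_num_le_of_natDegree_denom_ne_zero (hh : h ≠ 0)
    (hfg : algebraMap K[X] (RatFunc K) h = eval (algebraMap K (RatFunc K)) g f)
    (hg : g.denom.natDegree ≠ 0) : f.num.natDegree ≤ f.denom.natDegree := by
  obtain ⟨z, hz⟩ := IsAlgClosed.exists_root g.denom (degree_ne_of_natDegree_ne hg)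
  exact (le_max_left _ _).trans <| le_natDegree_of_ne_zero <|
    coeff_ne_zero_of_isUnit_aeval_homogenize (isUnit_aeval_homogenize_denom hh hfg) hz

theorem exists_num_sub_C_mul_denom_eq_C (hh : h ≠ 0)
    (hfg : algebraMap K[X] (RatFunc K) h = eval (algebraMap K (RatFunc K)) g f) {w : K}
    (hw : f.denom.IsRoot w) : ∃ e, g.num - Polynomial.C w * g.denom = Polynomial.C e :=
  let ⟨e, _, he⟩ := Polynomial.isUnit_iff.mp <| isUnit_sub_C_mul_of_isUnit_aeval_homogenize
    (isUnit_aeval_homogenize_denom hh hfg) (isCoprime_num_denom g) (le_max_right _ _) hw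
  ⟨e, he.symm⟩

theorem natDegree_denom_ne_zero_of_isRoot (hh : h ≠ 0)
    (hfg : algebraMap K[X] (RatFunc K) h = eval (algebraMap K (RatFunc K)) g f)
    (hg : ∀ c, g ≠ C c) {w : K} (hw : f.denom.IsRoot w) : g.denom.natDegree ≠ 0 := by
  intro hv
  obtain ⟨e, he⟩ := exists_num_sub_C_mul_denom_eq_C hh hfg hw
  have hu : g.num.natDegree = 0 := by
    rw [sub_eq_iff_eq_add'.mp he]
    exact Nat.le_zero.mp <| (natDegree_add_le _ _).trans <| by
      simpa [hv] using natDegree_C_mul_le w g.denom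
  exact ((eq_C_iff g).mpr ⟨hu, hv⟩).elim hg

theorem denom_eq_X_sub_C_pow (hh : h ≠ 0)
    (hfg : algebraMap K[X] (RatFunc K) h = eval (algebraMap K (RatFunc K)) g f)
    (hg : ∀ c, g ≠ C c) {w : K} (hw : f.denom.IsRoot w) :
    f.denom = (Polynomial.X - Polynomial.C w) ^ f.denom.natDegree := by
  refine eq_X_sub_C_pow_of_forall_isRoot_eq (monic_denom f) fun w' hw' => ?_
  by_contra hne
  obtain ⟨e, he⟩ := exists_num_sub_C_mul_denom_eq_C hh hfg hw
  obtain ⟨e', he'⟩ := exists_num_sub_C_mul_denom_eq_C hh hfg hw'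
  have hv : Polynomial.C (w - w') * g.denom = Polynomial.C (e' - e) := by
    rw [map_sub, map_sub]; linear_combination he' - he
  apply natDegree_denom_ne_zero_of_isRoot hh hfg hg hw
  rw [← natDegree_C_mul (sub_ne_zero.mpr (Ne.symm hne)), hv, natDegree_C]

theorem denom_eq_one_of_denom_eq_one (hh : h ≠ 0)
    (hfg : algebraMap K[X] (RatFunc K) h = eval (algebraMap K (RatFunc K)) g f)
    (hf : ∀ c, f ≠ C c) (hf1 : f.denom = 1) : g.denom = 1 := by
  refine (monic_denom g).natDegree_eq_zero.mp <| by_contra fun hg => ?_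
  have hp := natDegree_num_le_of_natDegree_denom_ne_zero hh hfg hg
  rw [hf1, natDegree_one, Nat.le_zero] at hp
  exact ((eq_C_iff f).mpr ⟨hp, by simp [hf1]⟩).elim hf

end RatFunc

/-- If a nonconstant polynomial `h ∈ ℂ[z]` decomposes as `h = f ∘ g` with nonconstant
rational functions `f, g ∈ ℂ(z)`, then there is a linear fractional `ρ(z) = (az+b)/(cz+d)`
(with inverse `ρ⁻¹(z) = (dz-b)/(-cz+a)`) such that `f ∘ ρ⁻¹` and `ρ ∘ g` are both
polynomials. -/
theorem poly_decomposition_moebius (h : ℂ[X]) (hh : 0 < h.natDegree)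
    (f g : RatFunc ℂ) (hf : ∀ c : ℂ, f ≠ RatFunc.C c) (hg : ∀ c : ℂ, g ≠ RatFunc.C c)
    (hfg : algebraMap ℂ[X] (RatFunc ℂ) h = RatFunc.comp' f g) :
    ∃ a b c d : ℂ, a * d - b * c ≠ 0 ∧
      (∃ P : ℂ[X], (RatFunc.C a * g + RatFunc.C b) / (RatFunc.C c * g + RatFunc.C d) =
        algebraMap ℂ[X] (RatFunc ℂ) P) ∧
      (∃ Q : ℂ[X], RatFunc.comp' f ((RatFunc.C d * RatFunc.X - RatFunc.C b) /
          (-RatFunc.C c * RatFunc.X + RatFunc.C a)) = algebraMap ℂ[X] (RatFunc ℂ) Q) := by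
  have hh0 : h ≠ 0 := ne_zero_of_natDegree_gt hh
  by_cases hf1 : f.denom = 1
  · have hg1 := RatFunc.denom_eq_one_of_denom_eq_one hh0 hfg hf hf1
    refine ⟨1, 0, 0, 1, by norm_num, ⟨g.num, ?_⟩, ⟨f.num, ?_⟩⟩
    · simpa using RatFunc.eq_algebraMap_num_of_denom_eq_one hg1
    · have hρ : (RatFunc.C 1 * RatFunc.X - RatFunc.C 0) /
          (-RatFunc.C 0 * RatFunc.X + RatFunc.C 1) = (RatFunc.X : RatFunc ℂ) := by simp
      rw [RatFunc.comp', hρ, RatFunc.eval_X_left]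
      exact RatFunc.eq_algebraMap_num_of_denom_eq_one hf1
  · obtain ⟨w, hw⟩ := IsAlgClosed.exists_root f.denom
      (degree_ne_of_natDegree_ne ((RatFunc.monic_denom f).natDegree_pos.mpr hf1).ne')
    obtain ⟨e, he⟩ := RatFunc.exists_num_sub_C_mul_denom_eq_C hh0 hfg hw
    refine ⟨0, 1, 1, -w, by simp, ⟨C e⁻¹ * g.denom, ?_⟩,
      ⟨MvPolynomial.aeval ![C w * X + 1, X] (f.num.homogenize f.denom.natDegree), ?_⟩⟩
    · rw [← RatFunc.one_div_sub_C_eq he]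
      simp [sub_eq_add_neg]
    · have hρ : (RatFunc.C (-w) * RatFunc.X - RatFunc.C 1) /
          (-RatFunc.C 1 * RatFunc.X + RatFunc.C 0) = RatFunc.C w + RatFunc.X⁻¹ := by
        have hX := RatFunc.X_ne_zero (K := ℂ)
        simp only [map_neg, map_one, map_zero, neg_mul, one_mul, add_zero]
        field_simp
        ring
      rw [RatFunc.comp', hρ,
        RatFunc.eval_C_add_inv_X (RatFunc.denom_eq_X_sub_C_pow hh0 hfg hg hw)
        (RatFunc.natDegree_num_le_of_natDegree_denom_ne_zero hh0 hfg
          (RatFunc.natDegree_denom_ne_zero_of_isRoot hh0 hfg hg hw))]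

end
end

section
/- Let ω ∈ ℂ be a primitive third root of unity (so ω² + ω + 1 = 0). Define f(z) = (z³ − 6(ω + 1)z)/(3z² + 1) and g(z) = (2z³ + (ω + 1)z)/(z² − ω). Then f(g(z)) = (8z⁹ − 24z⁵ − 13z³ − 6z)/(12z⁸ + 13z⁶ + 12z⁴ − 1); in particular f ∘ g ∈ ℚ(z) has rational coefficients although f and g do not have real coefficients. -/
noncomputable section

/-- `f(z) = (z³ - 6(ω+1)z)/(3z² + 1)`. -/
def f14 (ω : ℂ) : RatFunc ℂ :=
  (RatFunc.X ^ 3 - RatFunc.C (6 * (ω + 1)) * RatFunc.X) / (3 * RatFunc.X ^ 2 + 1)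

/-- `g(z) = (2z³ + (ω+1)z)/(z² - ω)`. -/
def g14 (ω : ℂ) : RatFunc ℂ :=
  (2 * RatFunc.X ^ 3 + RatFunc.C (ω + 1) * RatFunc.X) / (RatFunc.X ^ 2 - RatFunc.C ω)

/-!
A non-constant rational function `g` is transcendental over `ℂ`, so substituting `g` for `X`
is a `ℂ`-algebra embedding of `ℂ(z)` into itself; hence `f(g(z))` is obtained from `f` by field
operations, and the identity reduces to two polynomial identities modulo `ω² + ω + 1`.

The fractions defining `f` and `g` are already reduced: modulo its denominator each numerator
is congruent to a nonzero multiple of `z`, while the denominators do not vanish at `0`. So their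
normalized numerators and denominators can be read off, and they contain the non-real
coefficients `-2(ω + 1)` (numerator of `f`) and `-ω` (denominator of `g`).
-/

open Polynomial

theorem IsCoprime.gcd_eq_one {R : Type*} [CommRing R] [IsBezout R] [IsDomain R]
    [NormalizedGCDMonoid R] {x y : R} (h : IsCoprime x y) : gcd x y = 1 := by
  rw [← normalize_gcd, normalize_eq_one]
  exact (gcd_isUnit_iff x y).2 h

namespace RatFunc

variable {K : Type*} [Field K]

theorem num_div_of_isCoprime {p q : K[X]} (hpq : IsCoprime p q) :
    num (algebraMap _ _ p / algebraMap _ _ q) = Polynomial.C q.leadingCoeff⁻¹ * p := by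
  classical
  simp [hpq.gcd_eq_one]

theorem denom_div_of_isCoprime {p q : K[X]} (hpq : IsCoprime p q) (hq : q ≠ 0) :
    denom (algebraMap _ _ p / algebraMap _ _ q) = Polynomial.C q.leadingCoeff⁻¹ * q := by
  classical
  simp [denom_div _ hq, hpq.gcd_eq_one]

def compAlgHom (g : RatFunc K) (hg : Transcendental K g) : RatFunc K →ₐ[K] RatFunc K :=
  (IntermediateField.val _).comp (algEquivOfTranscendental g hg).toAlgHom

@[simp]
theorem compAlgHom_X (g : RatFunc K) (hg : Transcendental K g) : compAlgHom g hg X = g :=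
  algEquivOfTranscendental_X g hg

@[simp]
theorem compAlgHom_C (g : RatFunc K) (hg : Transcendental K g) (c : K) :
    compAlgHom g hg (C c) = C c := by
  rw [← algebraMap_eq_C, AlgHom.commutes]

theorem comp'_eq_compAlgHom (f g : RatFunc ℂ) (hg : Transcendental ℂ g) :
    f.comp' g = compAlgHom g hg f :=
  (algEquivOfTranscendental_apply g hg f).symm

end RatFunc

theorem Polynomial.isCoprime_C_mul_X_add_mul {K : Type*} [Field K] {a : K} (ha : a ≠ 0)
    {q : K[X]} (hq : q.coeff 0 ≠ 0) (r : K[X]) : IsCoprime (C a * X + r * q) q := by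
  refine IsCoprime.add_mul_right_left ?_ r
  rw [isCoprime_mul_unit_left_left (isUnit_C.2 ha.isUnit)]
  exact irreducible_X.coprime_iff_not_dvd.2 (by rwa [X_dvd_iff])

theorem Complex.im_ne_zero_of_sq_add_add_one_eq_zero {ω : ℂ} (hω : ω ^ 2 + ω + 1 = 0) :
    ω.im ≠ 0 := by
  intro him
  have hre := congrArg Complex.re hω
  simp only [add_re, one_re, pow_two, mul_re, him, zero_re, mul_zero, sub_zero] at hre
  nlinarith [sq_nonneg (2 * ω.re + 1)]

theorem composition_identity {F : Type*} [Field F] {x ω g : F} (hω : ω ^ 2 + ω + 1 = 0)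
    (hx : x ^ 2 - ω ≠ 0) (hg : g = (2 * x ^ 3 + (ω + 1) * x) / (x ^ 2 - ω)) :
    (g ^ 3 - 6 * (ω + 1) * g) / (3 * g ^ 2 + 1) =
      (8 * x ^ 9 - 24 * x ^ 5 - 13 * x ^ 3 - 6 * x) /
        (12 * x ^ 8 + 13 * x ^ 6 + 12 * x ^ 4 - 1) := by
  have hnum : g ^ 3 - 6 * (ω + 1) * g =
      (8 * x ^ 9 - 24 * x ^ 5 - 13 * x ^ 3 - 6 * x) / (x ^ 2 - ω) ^ 3 := by
    rw [hg]
    field_simp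
    linear_combination (24 * x ^ 5 + (ω + 14) * x ^ 3 - 6 * (ω ^ 2 + ω - 1) * x) * hω
  have hden : 3 * g ^ 2 + 1 = (12 * x ^ 8 + 13 * x ^ 6 + 12 * x ^ 4 - 1) / (x ^ 2 - ω) ^ 3 := by
    rw [hg]
    field_simp
    linear_combination (-9 * x ^ 4 - 3 * ω * x ^ 2 - ω + 1) * hω
  rw [hnum, hden, div_div_div_cancel_right₀ (pow_ne_zero 3 hx)]

theorem f14_eq (ω : ℂ) : f14 ω = algebraMap ℂ[X] (RatFunc ℂ) (X ^ 3 - C (6 * (ω + 1)) * X) /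
    algebraMap ℂ[X] (RatFunc ℂ) (3 * X ^ 2 + 1) := by
  simp [f14, map_ofNat]

theorem g14_eq (ω : ℂ) : g14 ω = algebraMap ℂ[X] (RatFunc ℂ) (2 * X ^ 3 + C (ω + 1) * X) /
    algebraMap ℂ[X] (RatFunc ℂ) (X ^ 2 - C ω) := by
  simp [g14, map_ofNat]

theorem transcendental_g14 (ω : ℂ) : Transcendental ℂ (g14 ω) := by
  refine RatFunc.transcendental_of_ne_C _ ?_
  rintro ⟨c, hc⟩
  rw [g14_eq, div_eq_iff (RatFunc.algebraMap_ne_zero (X_pow_sub_C_ne_zero two_pos ω)),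
    ← RatFunc.algebraMap_C, ← map_mul] at hc
  simpa [coeff_one] using congrArg (coeff · 3) (RatFunc.algebraMap_injective ℂ hc)

theorem comp'_f14_g14 {ω : ℂ} (hω : ω ^ 2 + ω + 1 = 0) :
    RatFunc.comp' (f14 ω) (g14 ω) =
      (8 * RatFunc.X ^ 9 - 24 * RatFunc.X ^ 5 - 13 * RatFunc.X ^ 3 - 6 * RatFunc.X) /
        (12 * RatFunc.X ^ 8 + 13 * RatFunc.X ^ 6 + 12 * RatFunc.X ^ 4 - 1) := by
  rw [RatFunc.comp'_eq_compAlgHom _ _ (transcendental_g14 ω), f14]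
  simp only [map_div₀, map_sub, map_add, map_mul, map_pow, map_ofNat, map_one,
    RatFunc.compAlgHom_X, RatFunc.compAlgHom_C]
  refine composition_identity ?_ ?_ (by rw [g14, map_add, map_one])
  · simpa only [map_add, map_pow, map_one, map_zero] using congrArg RatFunc.C hω
  · simpa using RatFunc.algebraMap_ne_zero (X_pow_sub_C_ne_zero two_pos ω)

theorem not_isReal_f14 {ω : ℂ} (hω : ω.im ≠ 0) : ¬ (f14 ω).IsReal := by
  have hcop : IsCoprime (X ^ 3 - C (6 * (ω + 1)) * X) (3 * X ^ 2 + 1 : ℂ[X]) := by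
    -- `3 (X³ - 6(ω + 1) X) = -(18ω + 19) X + X (3X² + 1)`
    refine IsCoprime.of_mul_left_right (x := C 3) ?_
    convert isCoprime_C_mul_X_add_mul (a := -(18 * ω + 19)) ?_ (q := 3 * X ^ 2 + 1) ?_ X
      using 1
    · simp only [map_neg, map_add, map_mul, map_ofNat, map_one]
      ring
    · intro h
      exact hω (by simpa using congrArg Complex.im h)
    · simp
  have hlc : (3 * X ^ 2 + 1 : ℂ[X]).leadingCoeff = 3 := by
    rw [leadingCoeff, show natDegree _ = 2 by compute_degree!]
    simp [coeff_one]
  rintro ⟨hnum, -⟩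
  have hcoeff := hnum 1
  rw [f14_eq, RatFunc.num_div_of_isCoprime hcop, hlc] at hcoeff
  exact hω (by simpa using hcoeff)

theorem not_isReal_g14 {ω : ℂ} (hω : ω.im ≠ 0) : ¬ (g14 ω).IsReal := by
  have hcop : IsCoprime (2 * X ^ 3 + C (ω + 1) * X) (X ^ 2 - C ω) := by
    convert isCoprime_C_mul_X_add_mul (a := 3 * ω + 1) ?_ (q := X ^ 2 - C ω) ?_ (2 * X) using 1
    · simp only [map_add, map_mul, map_ofNat, map_one]
      ring
    · intro h
      exact hω (by simpa using congrArg Complex.im h)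
    · simpa using fun h : ω = 0 => hω (by simp [h])
  rintro ⟨-, hdenom⟩
  have hcoeff := hdenom 0
  rw [g14_eq, RatFunc.denom_div_of_isCoprime hcop (X_pow_sub_C_ne_zero two_pos ω),
    (monic_X_pow_sub_C ω two_ne_zero).leadingCoeff] at hcoeff
  exact hω (by simpa using hcoeff)

/-- **Example (ℓ = 3).** For a primitive third root of unity `ω`, with
`f(z) = (z³ - 6(ω+1)z)/(3z² + 1)` and `g(z) = (2z³ + (ω+1)z)/(z² - ω)` one has
`f(g(z)) = (8z⁹ - 24z⁵ - 13z³ - 6z)/(12z⁸ + 13z⁶ + 12z⁴ - 1) ∈ ℚ(z)`, although `f` and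
`g` do not have real coefficients. -/
theorem explicit_example (ω : ℂ) (hω : ω ^ 2 + ω + 1 = 0) :
    RatFunc.comp' (f14 ω) (g14 ω) =
      (8 * RatFunc.X ^ 9 - 24 * RatFunc.X ^ 5 - 13 * RatFunc.X ^ 3 - 6 * RatFunc.X) /
        (12 * RatFunc.X ^ 8 + 13 * RatFunc.X ^ 6 + 12 * RatFunc.X ^ 4 - 1) ∧
    ¬ (f14 ω).IsReal ∧ ¬ (g14 ω).IsReal := by
  have him := Complex.im_ne_zero_of_sq_add_add_one_eq_zero hω
  exact ⟨comp'_f14_g14 hω, not_isReal_f14 him, not_isReal_g14 him⟩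

end
end
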